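/- Let S be an additive commutative monoid with an additive involution I satisfying I(0) = 0. Define u ∼ v iff there exist u₀, u₁ ∈ S with u + u₀ + I(u₀) = v + u₁ + I(u₁). Then ∼ is an equivalence relation compatible with addition, the quotient S/∼ is an abelian group, and the inverse of the class [u] is [I(u)]. -/
import Mathlib


/-- T-completion: for an additive commutative monoid `S` with an additive
involution `I` (with `I 0 = 0`), the relation
`u ∼ v ↔ ∃ u₀ u₁, u + (u₀ + I u₀) = v + (u₁ + I u₁)` is an equivalence
relation compatible with addition, the quotient is an abelian group, and
the inverse of the class of `u` is the class of `I u` (equivalently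
`u + I u ∼ 0`). -/
theorem T_completion {S : Type*} [AddCommMonoid S] (I : S →+ S)
    (hI : ∀ s : S, I (I s) = s) :
    Equivalence (fun u v : S => ∃ u₀ u₁ : S, u + (u₀ + I u₀) = v + (u₁ + I u₁)) ∧
    (∀ a b c d : S,
        (∃ u₀ u₁ : S, a + (u₀ + I u₀) = b + (u₁ + I u₁)) →
        (∃ u₀ u₁ : S, c + (u₀ + I u₀) = d + (u₁ + I u₁)) →
        (∃ u₀ u₁ : S, (a + c) + (u₀ + I u₀) = (b + d) + (u₁ + I u₁))) ∧
    (∀ u : S, ∃ u₀ u₁ : S, (u + I u) + (u₀ + I u₀) = 0 + (u₁ + I u₁)) := by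
  refine ⟨⟨fun u => ⟨0, 0, rfl⟩, ?_, ?_⟩, ?_, fun u => ⟨0, u, ?_⟩⟩
  · rintro u v ⟨a, b, h⟩; exact ⟨b, a, h.symm⟩
  · rintro u v w ⟨a, b, h1⟩ ⟨c, d, h2⟩
    refine ⟨a + c, b + d, ?_⟩
    have : u + (a + I a) + (c + I c) = w + (d + I d) + (b + I b) := by
      rw [h1]; rw [show v + (b + I b) + (c + I c) = v + (c + I c) + (b + I b) by abel, h2]
    simp only [map_add]
    calc u + (a + c + (I a + I c)) = u + (a + I a) + (c + I c) := by abel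
      _ = w + (d + I d) + (b + I b) := this
      _ = w + (b + d + (I b + I d)) := by abel
  · rintro a b c d ⟨p, q, h1⟩ ⟨r, s, h2⟩
    refine ⟨p + r, q + s, ?_⟩
    simp only [map_add]
    calc a + c + (p + r + (I p + I r)) = (a + (p + I p)) + (c + (r + I r)) := by abel
      _ = (b + (q + I q)) + (d + (s + I s)) := by rw [h1, h2]
      _ = b + d + (q + s + (I q + I s)) := by abel
  · rw [map_zero]; abel
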